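/- Let Λ be a fixed symmetric n×n real matrix and let k : ℝ → Matrix (Fin n) (Fin n) ℝ satisfy, for every t, the matrix ODE k'(t) = M(k(t)·Λ·k(t)ᵀ)·k(t) (in the sense of HasDerivAt). Then L(t) := k(t)·Λ·k(t)ᵀ satisfies the full symmetric Toda equation: for every t, L'(t) = ⁅M(L(t)), L(t)⁆ (HasDerivAt L at t with value M(L t)·L t − L t·M(L t)). -/

import Mathlib

/-! Differentiating `L = k Λ kᵀ` along `k' = M k` gives `L' = M L + L Mᵀ`, and `M = M(L)` is
skew-symmetric, so `L Mᵀ = -L M`. -/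

open Matrix

attribute [local instance] Matrix.normedAddCommGroup Matrix.normedSpace

/-- The Toda projection: `M(A)_{ij} = A_{ij}` for `i < j`, `M(A)_{ij} = -A_{ji}` for
`i > j`, and `M(A)_{ii} = 0`. -/
def todaProj {n : ℕ} (A : Matrix (Fin n) (Fin n) ℝ) : Matrix (Fin n) (Fin n) ℝ :=
  Matrix.of fun i j => if i < j then A i j else if j < i then -A j i else 0

section Calculus

variable {𝕜 : Type*} [NontriviallyNormedField 𝕜] [CompleteSpace 𝕜]
  {l m n : Type*} [Fintype l] [Fintype m] [Fintype n] {t : 𝕜}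

def Matrix.mulCLM : Matrix l m 𝕜 →L[𝕜] Matrix m n 𝕜 →L[𝕜] Matrix l n 𝕜 :=
  IsBilinearMap.toContinuousBilinearMap
    { add_left := Matrix.add_mul, smul_left := Matrix.smul_mul,
      add_right := Matrix.mul_add, smul_right := fun c A B => Matrix.mul_smul A c B }

theorem HasDerivAt.matrix_mul {A : 𝕜 → Matrix l m 𝕜} {B : 𝕜 → Matrix m n 𝕜}
    {A' : Matrix l m 𝕜} {B' : Matrix m n 𝕜} (hA : HasDerivAt A A' t) (hB : HasDerivAt B B' t) :
    HasDerivAt (fun s => A s * B s) (A' * B t + A t * B') t := by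
  rw [add_comm]
  exact Matrix.mulCLM.hasDerivAt_of_bilinear (fun _ => hA) (fun _ => hB)

theorem HasDerivAt.matrix_transpose {A : 𝕜 → Matrix m n 𝕜} {A' : Matrix m n 𝕜}
    (hA : HasDerivAt A A' t) : HasDerivAt (fun s => (A s)ᵀ) A'ᵀ t :=
  (transposeLinearEquiv m n 𝕜 𝕜).toLinearMap.toContinuousLinearMap.hasFDerivAt.comp_hasDerivAt t hA

theorem HasDerivAt.matrix_mul_mul_transpose {k : 𝕜 → Matrix m n 𝕜} {k' : Matrix m n 𝕜}
    (Λ : Matrix n n 𝕜) (hk : HasDerivAt k k' t) :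
    HasDerivAt (fun s => k s * Λ * (k s)ᵀ) (k' * Λ * (k t)ᵀ + k t * Λ * k'ᵀ) t := by
  simpa using ((hk.matrix_mul (hasDerivAt_const t Λ)).matrix_mul hk.matrix_transpose)

theorem HasDerivAt.matrix_mul_mul_transpose_of_skew {k : 𝕜 → Matrix m n 𝕜}
    {X : Matrix m m 𝕜} (Λ : Matrix n n 𝕜) (hX : Xᵀ = -X) (hk : HasDerivAt k (X * k t) t) :
    HasDerivAt (fun s => k s * Λ * (k s)ᵀ)
      (X * (k t * Λ * (k t)ᵀ) - (k t * Λ * (k t)ᵀ) * X) t := by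
  convert hk.matrix_mul_mul_transpose Λ using 1
  rw [transpose_mul, hX]
  simp only [Matrix.mul_neg, Matrix.mul_assoc, sub_eq_add_neg]

end Calculus

theorem transpose_todaProj {n : ℕ} (A : Matrix (Fin n) (Fin n) ℝ) :
    (todaProj A)ᵀ = -todaProj A := by
  ext i j
  simp only [todaProj, transpose_apply, of_apply]
  rcases lt_trichotomy i j with h | rfl | h
  · simp [h, h.not_gt]
  · simp
  · simp [h, h.not_gt]

theorem toda_flow_from_group_general {n : ℕ} (Λ : Matrix (Fin n) (Fin n) ℝ)
    (k : ℝ → Matrix (Fin n) (Fin n) ℝ)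
    (hk : ∀ t, HasDerivAt k (todaProj (k t * Λ * (k t)ᵀ) * k t) t) :
    ∀ t, HasDerivAt (fun t => k t * Λ * (k t)ᵀ)
      (todaProj (k t * Λ * (k t)ᵀ) * (k t * Λ * (k t)ᵀ)
        - (k t * Λ * (k t)ᵀ) * todaProj (k t * Λ * (k t)ᵀ)) t :=
  fun t => (hk t).matrix_mul_mul_transpose_of_skew Λ (transpose_todaProj _)

/-- If `k(t)` solves `k' = M(k·Λ·kᵀ)·k` with `Λ` symmetric, then `L(t) = k(t)·Λ·k(t)ᵀ`
solves the full symmetric Toda equation `L' = ⁅M(L), L⁆`. -/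
theorem toda_flow_from_group {n : ℕ} (Λ : Matrix (Fin n) (Fin n) ℝ) (hΛ : Λᵀ = Λ)
    (k : ℝ → Matrix (Fin n) (Fin n) ℝ)
    (hk : ∀ t, HasDerivAt k (todaProj (k t * Λ * (k t)ᵀ) * k t) t) :
    ∀ t, HasDerivAt (fun t => k t * Λ * (k t)ᵀ)
      (todaProj (k t * Λ * (k t)ᵀ) * (k t * Λ * (k t)ᵀ)
        - (k t * Λ * (k t)ᵀ) * todaProj (k t * Λ * (k t)ᵀ)) t :=
  toda_flow_from_group_general Λ k hk
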